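/- arXiv:1012.5880 — 4 statements merged into one kernel-verified Lean document; each statement's English description precedes it below -/
import Mathlib

section
/- Let f : I ⊆ ℝ → ℝ be a P-function (f ∈ P(I)), let a, b ∈ I with a < b, and suppose f is Lebesgue integrable on [a,b]. Then f((a+b)/2) ≤ (2/(b-a)) ∫_a^b f(x) dx ≤ 2[f(a) + f(b)]. -/
open MeasureTheory intervalIntegral Set

/-! Every point of `[a, b]` is a convex combination of `a` and `b`, so `f ≤ f a + f b` there;
integrating gives the right inequality. For the left one, the midpoint is the average of `x` and
its reflection `a + b - x`, so `f ((a + b) / 2) ≤ f x + f (a + b - x)`; integrating over `[a, b]`,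
the reflection does not change the integral, which gives `(b - a) f ((a + b) / 2) ≤ 2 ∫ f`. -/

variable {f : ℝ → ℝ} {a b : ℝ}

lemma le_add_of_mem_Icc (hfP : ∀ l ∈ Icc (0 : ℝ) 1, f (l * a + (1 - l) * b) ≤ f a + f b)
    (hab : a ≤ b) {x : ℝ} (hx : x ∈ Icc a b) : f x ≤ f a + f b := by
  rw [← segment_eq_Icc hab, segment_eq_image] at hx
  obtain ⟨θ, ⟨hθ0, hθ1⟩, rfl⟩ := hx
  have hcomb : (1 - θ) * a + (1 - (1 - θ)) * b = (1 - θ) • a + θ • b := by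
    simp only [smul_eq_mul]; ring
  simpa only [hcomb] using hfP (1 - θ) ⟨by linarith, by linarith⟩

lemma integral_le_sub_mul_add (hfP : ∀ l ∈ Icc (0 : ℝ) 1, f (l * a + (1 - l) * b) ≤ f a + f b)
    (hab : a ≤ b) (hint : IntervalIntegrable f volume a b) :
    ∫ x in a..b, f x ≤ (b - a) * (f a + f b) := by
  simpa only [intervalIntegral.integral_const, smul_eq_mul] using
    integral_mono_on hab hint intervalIntegrable_const fun x hx => le_add_of_mem_Icc hfP hab hx

lemma integral_comp_add_sub (f : ℝ → ℝ) (a b : ℝ) :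
    ∫ x in a..b, f (a + b - x) = ∫ x in a..b, f x := by
  simp only [integral_comp_sub_left, add_sub_cancel_left, add_sub_cancel_right]

lemma sub_mul_le_two_mul_integral
    (hmid : ∀ x ∈ Icc a b, f ((a + b) / 2) ≤ f x + f (a + b - x))
    (hab : a ≤ b) (hint : IntervalIntegrable f volume a b) :
    (b - a) * f ((a + b) / 2) ≤ 2 * ∫ x in a..b, f x := by
  have hint_refl : IntervalIntegrable (fun x => f (a + b - x)) volume a b := by
    simpa only [add_sub_cancel_left, add_sub_cancel_right] using
      (hint.comp_sub_left (a + b)).symm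
  calc (b - a) * f ((a + b) / 2) = ∫ _ in a..b, f ((a + b) / 2) := by
        rw [intervalIntegral.integral_const, smul_eq_mul]
    _ ≤ ∫ x in a..b, (f x + f (a + b - x)) :=
        integral_mono_on hab intervalIntegrable_const (hint.add hint_refl) hmid
    _ = 2 * ∫ x in a..b, f x := by
        rw [integral_add hint hint_refl, integral_comp_add_sub, two_mul]

theorem p_function_hadamard_general
    (I : Set ℝ) (hI : Convex ℝ I) (f : ℝ → ℝ)
    (hfP : ∀ x ∈ I, ∀ y ∈ I, ∀ l ∈ Set.Icc (0:ℝ) 1,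
      f (l * x + (1 - l) * y) ≤ f x + f y)
    (a b : ℝ) (ha : a ∈ I) (hb : b ∈ I) (hab : a < b)
    (hint : IntervalIntegrable f volume a b) :
    f ((a + b) / 2) ≤ (2 / (b - a)) * ∫ x in a..b, f x ∧
    (2 / (b - a)) * ∫ x in a..b, f x ≤ 2 * (f a + f b) := by
  have hba : 0 < b - a := sub_pos.mpr hab
  have hIcc : Icc a b ⊆ I := hI.ordConnected.out ha hb
  have hmid : ∀ x ∈ Icc a b, f ((a + b) / 2) ≤ f x + f (a + b - x) := fun x hx => by
    have hrefl : a + b - x ∈ Icc a b := ⟨by linarith [hx.2], by linarith [hx.1]⟩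
    have hhalf : (1 / 2 : ℝ) * x + (1 - 1 / 2) * (a + b - x) = (a + b) / 2 := by ring
    simpa only [hhalf] using
      hfP x (hIcc hx) _ (hIcc hrefl) (1 / 2) ⟨by norm_num, by norm_num⟩
  have hlower := sub_mul_le_two_mul_integral hmid hab.le hint
  have hupper := integral_le_sub_mul_add (hfP a ha b hb) hab.le hint
  rw [div_mul_eq_mul_div, le_div_iff₀ hba, div_le_iff₀ hba]
  constructor <;> linarith

/-- Hadamard-type inequality for P-functions:
if `f ∈ P(I)` (nonnegative and `f(λx+(1-λ)y) ≤ f(x) + f(y)` for `λ ∈ [0,1]`),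
`a, b ∈ I`, `a < b`, and `f` is Lebesgue integrable on `[a,b]`, then
`f((a+b)/2) ≤ (2/(b-a)) ∫_a^b f ≤ 2 (f(a)+f(b))`. -/
theorem p_function_hadamard
    (I : Set ℝ) (hI : Convex ℝ I) (f : ℝ → ℝ)
    (hf0 : ∀ x ∈ I, 0 ≤ f x)
    (hfP : ∀ x ∈ I, ∀ y ∈ I, ∀ l ∈ Set.Icc (0:ℝ) 1,
      f (l * x + (1 - l) * y) ≤ f x + f y)
    (a b : ℝ) (ha : a ∈ I) (hb : b ∈ I) (hab : a < b)
    (hint : IntervalIntegrable f volume a b) :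
    f ((a + b) / 2) ≤ (2 / (b - a)) * ∫ x in a..b, f x ∧
    (2 / (b - a)) * ∫ x in a..b, f x ≤ 2 * (f a + f b) :=
  p_function_hadamard_general I hI f hfP a b ha hb hab hint
end

section
/- Suppose f : Δ = [a,b] × [c,d] → ℝ (with a < b, c < d) is convex on the co-ordinates on Δ and all the integrals involved exist. Then f((a+b)/2, (c+d)/2) ≤ (1/2)[(1/(b-a)) ∫_a^b f(x, (c+d)/2) dx + (1/(d-c)) ∫_c^d f((a+b)/2, y) dy] ≤ (1/((b-a)(d-c))) ∫_a^b ∫_c^d f(x,y) dx dy ≤ (1/4)[(1/(b-a)) ∫_a^b f(x,c) dx + (1/(b-a)) ∫_a^b f(x,d) dx + (1/(d-c)) ∫_c^d f(a,y) dy + (1/(d-c)) ∫_c^d f(b,y) dy] ≤ (f(a,c) + f(a,d) + f(b,c) + f(b,d))/4. -/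
/-!
Both one-dimensional Hermite–Hadamard inequalities come from pairing `x` with its reflection
`a + b - x`: convexity puts `(g x + g (a + b - x)) / 2` between `g ((a + b) / 2)` and
`(g a + g b) / 2`, and its average over `[a, b]` is that of `g`. Applied to each partial
mapping and averaged over the other variable (the two orders of integration agreeing by
Fubini), these give the two-dimensional chain.
-/

open MeasureTheory intervalIntegral Set
open scoped Interval

section HermiteHadamard

variable {a b : ℝ} {g : ℝ → ℝ}

theorem ConvexOn.map_add_div_two_le_reflect (hg : ConvexOn ℝ (Icc a b) g) {x : ℝ}
    (hx : x ∈ Icc a b) : g ((a + b) / 2) ≤ (g x + g (a + b - x)) / 2 := by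
  have hx' : a + b - x ∈ Icc a b := ⟨by linarith [hx.2], by linarith [hx.1]⟩
  have h := hg.2 hx hx' (by norm_num : (0 : ℝ) ≤ 1 / 2) (by norm_num : (0 : ℝ) ≤ 1 / 2)
    (by norm_num)
  simp only [smul_eq_mul] at h
  rw [show 1 / 2 * x + 1 / 2 * (a + b - x) = (a + b) / 2 by ring] at h
  linarith

theorem ConvexOn.add_map_reflect_le (hg : ConvexOn ℝ (Icc a b) g) {x : ℝ}
    (hx : x ∈ Icc a b) : g x + g (a + b - x) ≤ g a + g b := by
  have hab : a ≤ b := hx.1.trans hx.2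
  rw [← segment_eq_Icc hab] at hx
  obtain ⟨θ₁, θ₂, h₁, h₂, hθ, rfl⟩ := hx
  have ha : a ∈ Icc a b := left_mem_Icc.2 hab
  have hb : b ∈ Icc a b := right_mem_Icc.2 hab
  have hreflect : a + b - (θ₁ • a + θ₂ • b) = θ₂ • a + θ₁ • b := by
    simp only [smul_eq_mul]
    linear_combination (-(a + b)) * hθ
  rw [hreflect]
  have hleft := hg.2 ha hb h₁ h₂ hθ
  have hright := hg.2 ha hb h₂ h₁ (by rw [add_comm, hθ])
  simp only [smul_eq_mul] at hleft hright ⊢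
  linear_combination hleft + hright + (g a + g b) * hθ

theorem IntervalIntegrable.comp_reflect (hi : IntervalIntegrable g volume a b) :
    IntervalIntegrable (fun x => g (a + b - x)) volume a b := by
  simpa using (hi.comp_sub_left (a + b)).symm

theorem intervalIntegral.integral_add_comp_reflect_div_two
    (hi : IntervalIntegrable g volume a b) :
    ∫ x in a..b, (g x + g (a + b - x)) / 2 = ∫ x in a..b, g x := by
  rw [intervalIntegral.integral_div, integral_add hi hi.comp_reflect, integral_comp_sub_left]
  simp only [add_sub_cancel_right, add_sub_cancel_left]
  ring

theorem intervalAverage_const (hab : a < b) (C : ℝ) : 1 / (b - a) * ∫ _ in a..b, C = C := by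
  rw [intervalIntegral.integral_const, smul_eq_mul]
  field_simp [(sub_pos.2 hab).ne']

theorem intervalAverage_mono_on (hab : a ≤ b) {u v : ℝ → ℝ}
    (hu : IntervalIntegrable u volume a b) (hv : IntervalIntegrable v volume a b)
    (h : ∀ x ∈ Icc a b, u x ≤ v x) :
    1 / (b - a) * ∫ x in a..b, u x ≤ 1 / (b - a) * ∫ x in a..b, v x :=
  mul_le_mul_of_nonneg_left (integral_mono_on hab hu hv h) (one_div_nonneg.2 (sub_nonneg.2 hab))

theorem intervalAverage_add_div_two {u v : ℝ → ℝ} (hu : IntervalIntegrable u volume a b)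
    (hv : IntervalIntegrable v volume a b) :
    1 / (b - a) * ∫ x in a..b, (u x + v x) / 2 =
      1 / 2 * (1 / (b - a) * (∫ x in a..b, u x) + 1 / (b - a) * ∫ x in a..b, v x) := by
  rw [intervalIntegral.integral_div, integral_add hu hv]
  ring

theorem ConvexOn.map_add_div_two_le_intervalAverage (hab : a < b) (hg : ConvexOn ℝ (Icc a b) g)
    (hi : IntervalIntegrable g volume a b) :
    g ((a + b) / 2) ≤ 1 / (b - a) * ∫ x in a..b, g x :=
  calc g ((a + b) / 2) = 1 / (b - a) * ∫ _ in a..b, g ((a + b) / 2) :=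
        (intervalAverage_const hab _).symm
    _ ≤ 1 / (b - a) * ∫ x in a..b, (g x + g (a + b - x)) / 2 :=
        intervalAverage_mono_on hab.le intervalIntegrable_const
          ((hi.add hi.comp_reflect).div_const 2) fun _ hx => hg.map_add_div_two_le_reflect hx
    _ = 1 / (b - a) * ∫ x in a..b, g x := by rw [integral_add_comp_reflect_div_two hi]

theorem ConvexOn.intervalAverage_le_add_div_two (hab : a < b) (hg : ConvexOn ℝ (Icc a b) g)
    (hi : IntervalIntegrable g volume a b) :
    1 / (b - a) * ∫ x in a..b, g x ≤ (g a + g b) / 2 :=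
  calc 1 / (b - a) * ∫ x in a..b, g x
        = 1 / (b - a) * ∫ x in a..b, (g x + g (a + b - x)) / 2 := by
        rw [integral_add_comp_reflect_div_two hi]
    _ ≤ 1 / (b - a) * ∫ _ in a..b, (g a + g b) / 2 :=
        intervalAverage_mono_on hab.le ((hi.add hi.comp_reflect).div_const 2)
          intervalIntegrable_const fun _ hx => by linarith [hg.add_map_reflect_le hx]
    _ = (g a + g b) / 2 := intervalAverage_const hab _

end HermiteHadamard

section Fubini

variable {E : Type*} [NormedAddCommGroup E] [NormedSpace ℝ E] {a b c d : ℝ}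
  {f : ℝ × ℝ → E}

theorem MeasureTheory.IntegrableOn.intervalIntegrable_intervalIntegral_snd
    (hf : IntegrableOn f (Ι a b ×ˢ Ι c d)) :
    IntervalIntegrable (fun x => ∫ y in c..d, f (x, y)) volume a b := by
  rw [intervalIntegrable_iff]
  rw [IntegrableOn, Measure.volume_eq_prod, ← Measure.prod_restrict] at hf
  simp only [intervalIntegral_eq_integral_uIoc]
  exact hf.integral_prod_left.smul _

theorem MeasureTheory.IntegrableOn.intervalIntegrable_intervalIntegral_fst
    (hf : IntegrableOn f (Ι a b ×ˢ Ι c d)) :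
    IntervalIntegrable (fun y => ∫ x in a..b, f (x, y)) volume c d := by
  rw [intervalIntegrable_iff]
  rw [IntegrableOn, Measure.volume_eq_prod, ← Measure.prod_restrict] at hf
  simp only [intervalIntegral_eq_integral_uIoc]
  exact hf.integral_prod_right.smul _

end Fubini

theorem intervalAverage_intervalAverage (a b c d : ℝ) (f : ℝ × ℝ → ℝ) :
    1 / (b - a) * ∫ x in a..b, 1 / (d - c) * ∫ y in c..d, f (x, y) =
      1 / ((b - a) * (d - c)) * ∫ x in a..b, ∫ y in c..d, f (x, y) := by
  rw [intervalIntegral.integral_const_mul, ← mul_assoc, one_div_mul_one_div]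

theorem intervalAverage_intervalAverage_swap {a b c d : ℝ} {f : ℝ × ℝ → ℝ}
    (hf : IntegrableOn f (Ι a b ×ˢ Ι c d)) :
    1 / (d - c) * ∫ y in c..d, 1 / (b - a) * ∫ x in a..b, f (x, y) =
      1 / ((b - a) * (d - c)) * ∫ x in a..b, ∫ y in c..d, f (x, y) := by
  rw [intervalIntegral.integral_const_mul, ← mul_assoc, one_div_mul_one_div, mul_comm (d - c),
    intervalIntegral_intervalIntegral_swap (F := fun x y => f (x, y)) hf]

theorem coordinated_convex_hadamard_general
    (a b c d : ℝ) (hab : a < b) (hcd : c < d) (f : ℝ × ℝ → ℝ)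
    (hfx : ∀ x ∈ Set.Icc a b, ConvexOn ℝ (Set.Icc c d) (fun v => f (x, v)))
    (hfy : ∀ y ∈ Set.Icc c d, ConvexOn ℝ (Set.Icc a b) (fun u => f (u, y)))
    (hix : ∀ x ∈ Set.Icc a b, IntervalIntegrable (fun v => f (x, v)) volume c d)
    (hiy : ∀ y ∈ Set.Icc c d, IntervalIntegrable (fun u => f (u, y)) volume a b)
    (hiF : IntegrableOn f (Set.Icc a b ×ˢ Set.Icc c d) volume) :
    f ((a + b) / 2, (c + d) / 2) ≤
      (1 / 2) * ((1 / (b - a)) * (∫ x in a..b, f (x, (c + d) / 2)) +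
        (1 / (d - c)) * ∫ y in c..d, f ((a + b) / 2, y)) ∧
    (1 / 2) * ((1 / (b - a)) * (∫ x in a..b, f (x, (c + d) / 2)) +
        (1 / (d - c)) * ∫ y in c..d, f ((a + b) / 2, y)) ≤
      (1 / ((b - a) * (d - c))) * ∫ x in a..b, ∫ y in c..d, f (x, y) ∧
    (1 / ((b - a) * (d - c))) * (∫ x in a..b, ∫ y in c..d, f (x, y)) ≤
      (1 / 4) * ((1 / (b - a)) * (∫ x in a..b, f (x, c)) +
        (1 / (b - a)) * (∫ x in a..b, f (x, d)) +
        (1 / (d - c)) * (∫ y in c..d, f (a, y)) +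
        (1 / (d - c)) * ∫ y in c..d, f (b, y)) ∧
    (1 / 4) * ((1 / (b - a)) * (∫ x in a..b, f (x, c)) +
        (1 / (b - a)) * (∫ x in a..b, f (x, d)) +
        (1 / (d - c)) * (∫ y in c..d, f (a, y)) +
        (1 / (d - c)) * ∫ y in c..d, f (b, y)) ≤
      (f (a, c) + f (a, d) + f (b, c) + f (b, d)) / 4 := by
  have hF : IntegrableOn f (Ι a b ×ˢ Ι c d) := hiF.mono_set <| by
    rw [uIoc_of_le hab.le, uIoc_of_le hcd.le]
    exact prod_mono Ioc_subset_Icc_self Ioc_subset_Icc_self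
  have hmx := hF.intervalIntegrable_intervalIntegral_snd
  have hmy := hF.intervalIntegrable_intervalIntegral_fst
  have hDx := intervalAverage_intervalAverage a b c d f
  have hDy := intervalAverage_intervalAverage_swap hF
  have hma : (a + b) / 2 ∈ Icc a b := ⟨by linarith, by linarith⟩
  have hmc : (c + d) / 2 ∈ Icc c d := ⟨by linarith, by linarith⟩
  have ha := left_mem_Icc.2 hab.le
  have hb := right_mem_Icc.2 hab.le
  have hc := left_mem_Icc.2 hcd.le
  have hd := right_mem_Icc.2 hcd.le
  refine ⟨?_, ?_, ?_, ?_⟩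
  · linarith [(hfy _ hmc).map_add_div_two_le_intervalAverage hab (hiy _ hmc),
      (hfx _ hma).map_add_div_two_le_intervalAverage hcd (hix _ hma)]
  · have havg_x := intervalAverage_mono_on hab.le (hiy _ hmc) (hmx.const_mul (1 / (d - c)))
      fun x hx => (hfx x hx).map_add_div_two_le_intervalAverage hcd (hix x hx)
    have havg_y := intervalAverage_mono_on hcd.le (hix _ hma) (hmy.const_mul (1 / (b - a)))
      fun y hy => (hfy y hy).map_add_div_two_le_intervalAverage hab (hiy y hy)
    linarith
  · have havg_x := intervalAverage_mono_on hab.le (hmx.const_mul (1 / (d - c)))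
      (((hiy c hc).add (hiy d hd)).div_const 2)
      fun x hx => (hfx x hx).intervalAverage_le_add_div_two hcd (hix x hx)
    have havg_y := intervalAverage_mono_on hcd.le (hmy.const_mul (1 / (b - a)))
      (((hix a ha).add (hix b hb)).div_const 2)
      fun y hy => (hfy y hy).intervalAverage_le_add_div_two hab (hiy y hy)
    rw [intervalAverage_add_div_two (hiy c hc) (hiy d hd)] at havg_x
    rw [intervalAverage_add_div_two (hix a ha) (hix b hb)] at havg_y
    linarith
  · linarith [(hfy c hc).intervalAverage_le_add_div_two hab (hiy c hc),
      (hfy d hd).intervalAverage_le_add_div_two hab (hiy d hd),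
      (hfx a ha).intervalAverage_le_add_div_two hcd (hix a ha),
      (hfx b hb).intervalAverage_le_add_div_two hcd (hix b hb)]

/-- Dragomir's Hadamard-type inequalities for functions convex on the
co-ordinates on the rectangle `Δ = [a,b] × [c,d]` (all integrals involved
are assumed to exist). -/
theorem coordinated_convex_hadamard
    (a b c d : ℝ) (hab : a < b) (hcd : c < d) (f : ℝ × ℝ → ℝ)
    (hfx : ∀ x ∈ Set.Icc a b, ConvexOn ℝ (Set.Icc c d) (fun v => f (x, v)))
    (hfy : ∀ y ∈ Set.Icc c d, ConvexOn ℝ (Set.Icc a b) (fun u => f (u, y)))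
    (hix : ∀ x ∈ Set.Icc a b, IntervalIntegrable (fun v => f (x, v)) volume c d)
    (hiy : ∀ y ∈ Set.Icc c d, IntervalIntegrable (fun u => f (u, y)) volume a b)
    (hiF : IntegrableOn f (Set.Icc a b ×ˢ Set.Icc c d) volume)
    (hiI : IntervalIntegrable (fun x => ∫ y in c..d, f (x, y)) volume a b) :
    f ((a + b) / 2, (c + d) / 2) ≤
      (1 / 2) * ((1 / (b - a)) * (∫ x in a..b, f (x, (c + d) / 2)) +
        (1 / (d - c)) * ∫ y in c..d, f ((a + b) / 2, y)) ∧
    (1 / 2) * ((1 / (b - a)) * (∫ x in a..b, f (x, (c + d) / 2)) +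
        (1 / (d - c)) * ∫ y in c..d, f ((a + b) / 2, y)) ≤
      (1 / ((b - a) * (d - c))) * ∫ x in a..b, ∫ y in c..d, f (x, y) ∧
    (1 / ((b - a) * (d - c))) * (∫ x in a..b, ∫ y in c..d, f (x, y)) ≤
      (1 / 4) * ((1 / (b - a)) * (∫ x in a..b, f (x, c)) +
        (1 / (b - a)) * (∫ x in a..b, f (x, d)) +
        (1 / (d - c)) * (∫ y in c..d, f (a, y)) +
        (1 / (d - c)) * ∫ y in c..d, f (b, y)) ∧
    (1 / 4) * ((1 / (b - a)) * (∫ x in a..b, f (x, c)) +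
        (1 / (b - a)) * (∫ x in a..b, f (x, d)) +
        (1 / (d - c)) * (∫ y in c..d, f (a, y)) +
        (1 / (d - c)) * ∫ y in c..d, f (b, y)) ≤
      (f (a, c) + f (a, d) + f (b, c) + f (b, d)) / 4 :=
  coordinated_convex_hadamard_general a b c d hab hcd f hfx hfy hix hiy hiF
end

section
/- Let f : Δ = [a,b] × [c,d] → ℝ (a < b, c < d) be a Godunova–Levin function on Δ, i.e., f is nonnegative and f(λx + (1-λ)z, λy + (1-λ)w) ≤ f(x,y)/λ + f(z,w)/(1-λ) for all (x,y), (z,w) ∈ Δ and λ ∈ (0,1). Then f is a co-ordinated Godunova–Levin function on Δ: for every x ∈ [a,b] the partial mapping f_x : [c,d] → ℝ, f_x(v) = f(x,v), is a Godunova–Levin function, and for every y ∈ [c,d] the partial mapping f_y : [a,b] → ℝ, f_y(u) = f(u,y), is a Godunova–Levin function. -/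
open Set

/-- `f ∈ Q(s)` in the usual notation. -/
def GodunovaLevinOn {E : Type*} [AddCommGroup E] [Module ℝ E] (s : Set E) (f : E → ℝ) :
    Prop :=
  (∀ x ∈ s, 0 ≤ f x) ∧
    ∀ x ∈ s, ∀ y ∈ s, ∀ l : ℝ, 0 < l → l < 1 →
      f (l • x + (1 - l) • y) ≤ f x / l + f y / (1 - l)

namespace GodunovaLevinOn

variable {E F : Type*} [AddCommGroup E] [Module ℝ E] [AddCommGroup F] [Module ℝ F]

theorem comp_affineMap {s : Set E} {f : E → ℝ} (hf : GodunovaLevinOn s f) (g : F →ᵃ[ℝ] E) :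
    GodunovaLevinOn (g ⁻¹' s) (f ∘ g) := by
  refine ⟨fun x hx => hf.1 _ hx, fun x hx y hy l hl hl1 => ?_⟩
  have hg : g (l • x + (1 - l) • y) = l • g x + (1 - l) • g y :=
    Convex.combo_affine_apply (add_sub_cancel l 1)
  simpa only [Function.comp_apply, hg] using hf.2 _ hx _ hy l hl hl1

theorem prodMk_left {s : Set E} {t : Set F} {f : E × F → ℝ}
    (hf : GodunovaLevinOn (s ×ˢ t) f) {x : E} (hx : x ∈ s) :
    GodunovaLevinOn t fun v => f (x, v) := by
  have hslice := hf.comp_affineMap ((AffineMap.const ℝ F x).prod (AffineMap.id ℝ F))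
  rwa [show (AffineMap.const ℝ F x).prod (AffineMap.id ℝ F) ⁻¹' (s ×ˢ t) = t by
    ext v; simp [hx]] at hslice

theorem prodMk_right {s : Set E} {t : Set F} {f : E × F → ℝ}
    (hf : GodunovaLevinOn (s ×ˢ t) f) {y : F} (hy : y ∈ t) :
    GodunovaLevinOn s fun u => f (u, y) := by
  have hslice := hf.comp_affineMap ((AffineMap.id ℝ E).prod (AffineMap.const ℝ E y))
  rwa [show (AffineMap.id ℝ E).prod (AffineMap.const ℝ E y) ⁻¹' (s ×ˢ t) = s by
    ext u; simp [hy]] at hslice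

end GodunovaLevinOn

theorem godunova_levin_imp_coordinated_general
    (a b c d : ℝ) (f : ℝ × ℝ → ℝ)
    (hf0 : ∀ p ∈ Set.Icc a b ×ˢ Set.Icc c d, 0 ≤ f p)
    (hfQ : ∀ x ∈ Set.Icc a b, ∀ y ∈ Set.Icc c d, ∀ z ∈ Set.Icc a b,
      ∀ w ∈ Set.Icc c d, ∀ l : ℝ, 0 < l → l < 1 →
      f (l * x + (1 - l) * z, l * y + (1 - l) * w) ≤
        f (x, y) / l + f (z, w) / (1 - l)) :
    (∀ x ∈ Set.Icc a b,
      (∀ v ∈ Set.Icc c d, 0 ≤ f (x, v)) ∧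
      (∀ v₁ ∈ Set.Icc c d, ∀ v₂ ∈ Set.Icc c d, ∀ l : ℝ, 0 < l → l < 1 →
        f (x, l * v₁ + (1 - l) * v₂) ≤ f (x, v₁) / l + f (x, v₂) / (1 - l))) ∧
    (∀ y ∈ Set.Icc c d,
      (∀ u ∈ Set.Icc a b, 0 ≤ f (u, y)) ∧
      (∀ u₁ ∈ Set.Icc a b, ∀ u₂ ∈ Set.Icc a b, ∀ l : ℝ, 0 < l → l < 1 →
        f (l * u₁ + (1 - l) * u₂, y) ≤ f (u₁, y) / l + f (u₂, y) / (1 - l))) := by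
  have hΔ : GodunovaLevinOn (Icc a b ×ˢ Icc c d) f := by
    refine ⟨hf0, ?_⟩
    rintro ⟨x, y⟩ ⟨hx, hy⟩ ⟨z, w⟩ ⟨hz, hw⟩ l hl hl1
    exact hfQ x hx y hy z hz w hw l hl hl1
  exact ⟨fun x hx => hΔ.prodMk_left hx, fun y hy => hΔ.prodMk_right hy⟩

/-- Every Godunova–Levin function on the rectangle `Δ = [a,b] × [c,d]`
(nonnegative, with `f(λx+(1-λ)z, λy+(1-λ)w) ≤ f(x,y)/λ + f(z,w)/(1-λ)` for
`λ ∈ (0,1)`) is a co-ordinated Godunova–Levin function: each partial mapping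
`v ↦ f(x,v)` and `u ↦ f(u,y)` is a Godunova–Levin function. -/
theorem godunova_levin_imp_coordinated
    (a b c d : ℝ) (hab : a < b) (hcd : c < d) (f : ℝ × ℝ → ℝ)
    (hf0 : ∀ p ∈ Set.Icc a b ×ˢ Set.Icc c d, 0 ≤ f p)
    (hfQ : ∀ x ∈ Set.Icc a b, ∀ y ∈ Set.Icc c d, ∀ z ∈ Set.Icc a b,
      ∀ w ∈ Set.Icc c d, ∀ l : ℝ, 0 < l → l < 1 →
      f (l * x + (1 - l) * z, l * y + (1 - l) * w) ≤
        f (x, y) / l + f (z, w) / (1 - l)) :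
    (∀ x ∈ Set.Icc a b,
      (∀ v ∈ Set.Icc c d, 0 ≤ f (x, v)) ∧
      (∀ v₁ ∈ Set.Icc c d, ∀ v₂ ∈ Set.Icc c d, ∀ l : ℝ, 0 < l → l < 1 →
        f (x, l * v₁ + (1 - l) * v₂) ≤ f (x, v₁) / l + f (x, v₂) / (1 - l))) ∧
    (∀ y ∈ Set.Icc c d,
      (∀ u ∈ Set.Icc a b, 0 ≤ f (u, y)) ∧
      (∀ u₁ ∈ Set.Icc a b, ∀ u₂ ∈ Set.Icc a b, ∀ l : ℝ, 0 < l → l < 1 →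
        f (l * u₁ + (1 - l) * u₂, y) ≤ f (u₁, y) / l + f (u₂, y) / (1 - l))) :=
  godunova_levin_imp_coordinated_general a b c d f hf0 hfQ
end

section
/- Suppose f : Δ = [a,b] × [a,b] → ℝ (a < b) is a co-ordinated Godunova–Levin function on Δ, with the partial mappings integrable on [a,b]. Then (1/16) f((a+b)/2, (a+b)/2) ≤ (1/8)[(1/(b-a)) ∫_a^b {f(x, (a+b)/2) + f((a+b)/2, x)} dx] ≤ (1/(b-a)²) ∫_a^b ∫_a^b f(x,y) dy dx. -/
/-! Pairing `x` with its reflection `a + b - x` writes the midpoint `m = (a + b) / 2` as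
`½ x + ½ (a + b - x)`, so the Godunova–Levin inequality with `λ = ½` gives
`g m ≤ 2 g x + 2 g (a + b - x)`; integrating and using that reflection preserves the integral
yields `(b - a) g m ≤ 4 ∫ g`. Applied to the partial mappings through the centre this is the left
inequality. Applied to every partial mapping `y ↦ f (x, y)`, and to `x ↦ ∫ f (x, y) dy` (which
inherits the midpoint bound by integrating it in `y`), it gives the right one. -/

open MeasureTheory Set

def GodunovaLevinIneqOn (s : Set ℝ) (g : ℝ → ℝ) : Prop :=
  ∀ u ∈ s, ∀ v ∈ s, ∀ l : ℝ, 0 < l → l < 1 → g (l * u + (1 - l) * v) ≤ g u / l + g v / (1 - l)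

lemma reflect_mem_Icc {a b x : ℝ} (hx : x ∈ Icc a b) : a + b - x ∈ Icc a b :=
  ⟨by linarith [hx.2], by linarith [hx.1]⟩

lemma midpoint_mem_Icc {a b : ℝ} (hab : a ≤ b) : (a + b) / 2 ∈ Icc a b :=
  ⟨by linarith, by linarith⟩

lemma GodunovaLevinIneqOn.midpoint_le {a b : ℝ} {g : ℝ → ℝ} (hg : GodunovaLevinIneqOn (Icc a b) g)
    {x : ℝ} (hx : x ∈ Icc a b) : g ((a + b) / 2) ≤ 2 * g x + 2 * g (a + b - x) := by
  have h := hg x hx (a + b - x) (reflect_mem_Icc hx) (1 / 2) (by norm_num) (by norm_num)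
  convert h using 2 <;> ring

lemma mul_le_two_mul_integral_of_le_add_reflect {a b c : ℝ} (hab : a ≤ b) {g : ℝ → ℝ}
    (hg : IntervalIntegrable g volume a b) (hc : ∀ x ∈ Icc a b, c ≤ g x + g (a + b - x)) :
    (b - a) * c ≤ 2 * ∫ x in a..b, g x := by
  have hreflect_int : IntervalIntegrable (fun x => g (a + b - x)) volume a b := by
    simpa using hg.symm.comp_sub_left (a + b)
  have hreflect : ∫ x in a..b, g (a + b - x) = ∫ x in a..b, g x := by
    simp [intervalIntegral.integral_comp_sub_left g (a + b)]
  have h := intervalIntegral.integral_mono_on hab intervalIntegrable_const (hg.add hreflect_int) hc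
  rw [intervalIntegral.integral_const, smul_eq_mul, intervalIntegral.integral_add hg hreflect_int,
    hreflect] at h
  linarith

lemma GodunovaLevinIneqOn.mul_le_four_mul_integral {a b : ℝ} (hab : a ≤ b) {g : ℝ → ℝ}
    (hg : GodunovaLevinIneqOn (Icc a b) g) (hint : IntervalIntegrable g volume a b) :
    (b - a) * g ((a + b) / 2) ≤ 4 * ∫ x in a..b, g x := by
  have h := mul_le_two_mul_integral_of_le_add_reflect hab (hint.const_mul 2)
    fun x hx => hg.midpoint_le hx
  rw [intervalIntegral.integral_const_mul] at h
  linarith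

section Coordinated

variable {a b : ℝ} {f : ℝ × ℝ → ℝ}

lemma mul_integral_midpoint_snd_le (hab : a ≤ b)
    (hfx : ∀ x ∈ Icc a b, GodunovaLevinIneqOn (Icc a b) fun y => f (x, y))
    (hix : ∀ x ∈ Icc a b, IntervalIntegrable (fun y => f (x, y)) volume a b)
    (hiy : IntervalIntegrable (fun x => f (x, (a + b) / 2)) volume a b)
    (hiI : IntervalIntegrable (fun x => ∫ y in a..b, f (x, y)) volume a b) :
    (b - a) * ∫ x in a..b, f (x, (a + b) / 2) ≤ 4 * ∫ x in a..b, ∫ y in a..b, f (x, y) := by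
  have h := intervalIntegral.integral_mono_on hab (hiy.const_mul (b - a)) (hiI.const_mul 4)
    fun x hx => (hfx x hx).mul_le_four_mul_integral hab (hix x hx)
  rwa [intervalIntegral.integral_const_mul, intervalIntegral.integral_const_mul] at h

lemma mul_integral_midpoint_fst_le (hab : a ≤ b)
    (hfy : ∀ y ∈ Icc a b, GodunovaLevinIneqOn (Icc a b) fun x => f (x, y))
    (hix : ∀ x ∈ Icc a b, IntervalIntegrable (fun y => f (x, y)) volume a b)
    (hiI : IntervalIntegrable (fun x => ∫ y in a..b, f (x, y)) volume a b) :
    (b - a) * ∫ y in a..b, f ((a + b) / 2, y) ≤ 4 * ∫ x in a..b, ∫ y in a..b, f (x, y) := by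
  have hmid : ∀ x ∈ Icc a b, ∫ y in a..b, f ((a + b) / 2, y) ≤
      2 * (∫ y in a..b, f (x, y)) + 2 * ∫ y in a..b, f (a + b - x, y) := by
    intro x hx
    have hx' := hix (a + b - x) (reflect_mem_Icc hx)
    rw [← intervalIntegral.integral_const_mul, ← intervalIntegral.integral_const_mul,
      ← intervalIntegral.integral_add ((hix x hx).const_mul 2) (hx'.const_mul 2)]
    exact intervalIntegral.integral_mono_on hab (hix _ (midpoint_mem_Icc hab))
      (((hix x hx).const_mul 2).add (hx'.const_mul 2)) fun y hy => (hfy y hy).midpoint_le hx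
  have h := mul_le_two_mul_integral_of_le_add_reflect hab (hiI.const_mul 2) hmid
  rw [intervalIntegral.integral_const_mul] at h
  linarith

end Coordinated

theorem coordinated_godunova_levin_hadamard_square_general
    (a b : ℝ) (hab : a < b) (f : ℝ × ℝ → ℝ)
    (hfx : ∀ x ∈ Set.Icc a b, ∀ v₁ ∈ Set.Icc a b, ∀ v₂ ∈ Set.Icc a b,
      ∀ l : ℝ, 0 < l → l < 1 →
      f (x, l * v₁ + (1 - l) * v₂) ≤ f (x, v₁) / l + f (x, v₂) / (1 - l))
    (hfy : ∀ y ∈ Set.Icc a b, ∀ u₁ ∈ Set.Icc a b, ∀ u₂ ∈ Set.Icc a b,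
      ∀ l : ℝ, 0 < l → l < 1 →
      f (l * u₁ + (1 - l) * u₂, y) ≤ f (u₁, y) / l + f (u₂, y) / (1 - l))
    (hix : ∀ x ∈ Set.Icc a b, IntervalIntegrable (fun v => f (x, v)) volume a b)
    (hiy : ∀ y ∈ Set.Icc a b, IntervalIntegrable (fun u => f (u, y)) volume a b)
    (hiI : IntervalIntegrable (fun x => ∫ y in a..b, f (x, y)) volume a b) :
    (1 / 16) * f ((a + b) / 2, (a + b) / 2) ≤
      (1 / 8) * ((1 / (b - a)) *
        ∫ x in a..b, (f (x, (a + b) / 2) + f ((a + b) / 2, x))) ∧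
    (1 / 8) * ((1 / (b - a)) *
        ∫ x in a..b, (f (x, (a + b) / 2) + f ((a + b) / 2, x))) ≤
      (1 / (b - a) ^ 2) * ∫ x in a..b, ∫ y in a..b, f (x, y) := by
  have hGLx : ∀ x ∈ Icc a b, GodunovaLevinIneqOn (Icc a b) fun y => f (x, y) := hfx
  have hGLy : ∀ y ∈ Icc a b, GodunovaLevinIneqOn (Icc a b) fun x => f (x, y) := hfy
  have hm := midpoint_mem_Icc hab.le
  have hcentre_fst := (hGLy _ hm).mul_le_four_mul_integral hab.le (hiy _ hm)
  have hcentre_snd := (hGLx _ hm).mul_le_four_mul_integral hab.le (hix _ hm)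
  have hslice_snd := mul_integral_midpoint_snd_le hab.le hGLx hix (hiy _ hm) hiI
  have hslice_fst := mul_integral_midpoint_fst_le hab.le hGLy hix hiI
  rw [intervalIntegral.integral_add (hiy _ hm) (hix _ hm)]
  set c := f ((a + b) / 2, (a + b) / 2)
  set I := (∫ x in a..b, f (x, (a + b) / 2)) + ∫ x in a..b, f ((a + b) / 2, x)
  have hba : 0 < b - a := sub_pos.mpr hab
  constructor
  · calc 1 / 16 * c = 1 / (b - a) * ((b - a) * c / 16) := by field_simp
      _ ≤ 1 / (b - a) * (I / 8) := mul_le_mul_of_nonneg_left (by linarith) (by positivity)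
      _ = 1 / 8 * (1 / (b - a) * I) := by ring
  · calc 1 / 8 * (1 / (b - a) * I) = 1 / (b - a) ^ 2 * ((b - a) * I / 8) := by field_simp
      _ ≤ 1 / (b - a) ^ 2 * ∫ x in a..b, ∫ y in a..b, f (x, y) :=
        mul_le_mul_of_nonneg_left (by linarith) (by positivity)

/-- Hadamard-type inequalities for a co-ordinated Godunova–Levin function on
the square `Δ = [a,b] × [a,b]`, with the partial mappings integrable on
`[a,b]` (and the double integral assumed to exist). -/
theorem coordinated_godunova_levin_hadamard_square
    (a b : ℝ) (hab : a < b) (f : ℝ × ℝ → ℝ)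
    (hf0 : ∀ p ∈ Set.Icc a b ×ˢ Set.Icc a b, 0 ≤ f p)
    (hfx : ∀ x ∈ Set.Icc a b, ∀ v₁ ∈ Set.Icc a b, ∀ v₂ ∈ Set.Icc a b,
      ∀ l : ℝ, 0 < l → l < 1 →
      f (x, l * v₁ + (1 - l) * v₂) ≤ f (x, v₁) / l + f (x, v₂) / (1 - l))
    (hfy : ∀ y ∈ Set.Icc a b, ∀ u₁ ∈ Set.Icc a b, ∀ u₂ ∈ Set.Icc a b,
      ∀ l : ℝ, 0 < l → l < 1 →
      f (l * u₁ + (1 - l) * u₂, y) ≤ f (u₁, y) / l + f (u₂, y) / (1 - l))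
    (hix : ∀ x ∈ Set.Icc a b, IntervalIntegrable (fun v => f (x, v)) volume a b)
    (hiy : ∀ y ∈ Set.Icc a b, IntervalIntegrable (fun u => f (u, y)) volume a b)
    (hiI : IntervalIntegrable (fun x => ∫ y in a..b, f (x, y)) volume a b) :
    (1 / 16) * f ((a + b) / 2, (a + b) / 2) ≤
      (1 / 8) * ((1 / (b - a)) *
        ∫ x in a..b, (f (x, (a + b) / 2) + f ((a + b) / 2, x))) ∧
    (1 / 8) * ((1 / (b - a)) *
        ∫ x in a..b, (f (x, (a + b) / 2) + f ((a + b) / 2, x))) ≤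
      (1 / (b - a) ^ 2) * ∫ x in a..b, ∫ y in a..b, f (x, y) :=
  coordinated_godunova_levin_hadamard_square_general a b hab f hfx hfy hix hiy hiI
end
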